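/- arXiv:1307.7651 — 2 statements merged into one kernel-verified Lean document; each statement's English description precedes it below -/
import Mathlib

section
/- Let 1 < α ≤ 2, 0 ≤ η ≤ 1 and β > 0 satisfy β·Γ(α) > (1−η)^(α−1), and define the kernel k : [0,1] × [0,1] → ℝ by k(t,s) = β + (η−s)^(α−1)/Γ(α)·χ{s ≤ η} − (t−s)^(α−1)/Γ(α)·χ{s ≤ t}. Then for all t, s ∈ [0,1] one has k(t,s) ≥ c₁·Φ(s) > 0, where Φ(s) := (βΓ(α) + η^(α−1))/Γ(α) and c₁ := (βΓ(α) − (1−η)^(α−1))/(βΓ(α) + η^(α−1)). In particular 0 < c₁ ≤ 1 and k is strictly positive on [0,1]². -/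
open Real Set MeasureTheory

/-- The Green-type kernel of the fractional BVP:
`k(t,s) = β + (η−s)^(α−1)/Γ(α)·χ{s ≤ η} − (t−s)^(α−1)/Γ(α)·χ{s ≤ t}`. -/
noncomputable def kernel (α β η : ℝ) (t s : ℝ) : ℝ :=
  β + (if s ≤ η then (η - s) ^ (α - 1) / Real.Gamma α else 0)
    - (if s ≤ t then (t - s) ^ (α - 1) / Real.Gamma α else 0)

lemma rpow_add_le_add_rpow_real {x y p : ℝ} (hx : 0 ≤ x) (hy : 0 ≤ y)
    (hp : 0 ≤ p) (hp1 : p ≤ 1) : (x + y) ^ p ≤ x ^ p + y ^ p := by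
  have h := NNReal.rpow_add_le_add_rpow (⟨x, hx⟩ : NNReal) (⟨y, hy⟩ : NNReal) hp hp1
  have h2 := NNReal.coe_le_coe.2 h
  push_cast [NNReal.coe_rpow] at h2
  exact h2

/-- For `1 < α ≤ 2`, `0 ≤ η ≤ 1` and `β > 0` with `βΓ(α) > (1−η)^(α−1)`, the kernel
satisfies `k(t,s) ≥ c₁·Φ(s) > 0` on `[0,1]²`, where `Φ(s) = (βΓ(α) + η^(α−1))/Γ(α)` and
`c₁ = (βΓ(α) − (1−η)^(α−1))/(βΓ(α) + η^(α−1))`; moreover `0 < c₁ ≤ 1` and `k > 0`. -/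
theorem kernel_lower_bound (α β η : ℝ) (hα₁ : 1 < α) (hα₂ : α ≤ 2) (hβ : 0 < β)
    (hη₀ : 0 ≤ η) (hη₁ : η ≤ 1)
    (hβΓ : (1 - η) ^ (α - 1) < β * Real.Gamma α) :
    (0 < (β * Real.Gamma α - (1 - η) ^ (α - 1)) / (β * Real.Gamma α + η ^ (α - 1)) ∧
      (β * Real.Gamma α - (1 - η) ^ (α - 1)) / (β * Real.Gamma α + η ^ (α - 1)) ≤ 1) ∧
    ∀ t ∈ Set.Icc (0 : ℝ) 1, ∀ s ∈ Set.Icc (0 : ℝ) 1,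
      0 < (β * Real.Gamma α - (1 - η) ^ (α - 1)) / (β * Real.Gamma α + η ^ (α - 1)) *
          ((β * Real.Gamma α + η ^ (α - 1)) / Real.Gamma α) ∧
      (β * Real.Gamma α - (1 - η) ^ (α - 1)) / (β * Real.Gamma α + η ^ (α - 1)) *
          ((β * Real.Gamma α + η ^ (α - 1)) / Real.Gamma α) ≤ kernel α β η t s ∧
      0 < kernel α β η t s := by
  have hG : 0 < Real.Gamma α := Real.Gamma_pos_of_pos (by linarith)
  have hp : 0 < α - 1 := by linarith
  have hp1 : α - 1 ≤ 1 := by linarith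
  have h1η : 0 ≤ (1 - η) ^ (α - 1) := Real.rpow_nonneg (by linarith) _
  have hηp : 0 ≤ η ^ (α - 1) := Real.rpow_nonneg hη₀ _
  have hN : 0 < β * Real.Gamma α - (1 - η) ^ (α - 1) := by linarith
  have hD : 0 < β * Real.Gamma α + η ^ (α - 1) := by positivity
  have hsimp : (β * Real.Gamma α - (1 - η) ^ (α - 1)) / (β * Real.Gamma α + η ^ (α - 1)) *
      ((β * Real.Gamma α + η ^ (α - 1)) / Real.Gamma α)
      = (β * Real.Gamma α - (1 - η) ^ (α - 1)) / Real.Gamma α := by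
    field_simp
  refine ⟨⟨div_pos hN hD, (div_le_one hD).2 (by linarith)⟩, ?_⟩
  intro t ht s hs
  rw [hsimp]
  have hker : kernel α β η t s =
      (β * Real.Gamma α + (if s ≤ η then (η - s) ^ (α - 1) else 0)
        - (if s ≤ t then (t - s) ^ (α - 1) else 0)) / Real.Gamma α := by
    unfold kernel
    split <;> split <;> field_simp <;> ring
  have key : (β * Real.Gamma α - (1 - η) ^ (α - 1)) / Real.Gamma α ≤ kernel α β η t s := by
    rw [hker]
    gcongr ?_ / _
    by_cases hst : s ≤ t
    · by_cases hsη : s ≤ η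
      · simp only [hst, hsη, if_true]
        have hsub : (t - s) ^ (α - 1) ≤ (η - s) ^ (α - 1) + (1 - η) ^ (α - 1) :=
          calc (t - s) ^ (α - 1) ≤ ((η - s) + (1 - η)) ^ (α - 1) :=
                Real.rpow_le_rpow (by linarith) (by linarith [ht.2]) (le_of_lt hp)
            _ ≤ (η - s) ^ (α - 1) + (1 - η) ^ (α - 1) :=
                rpow_add_le_add_rpow_real (by linarith) (by linarith) (le_of_lt hp) hp1
        linarith
      · simp only [hst, hsη, if_true, if_false]
        push_neg at hsη
        have hmono : (t - s) ^ (α - 1) ≤ (1 - η) ^ (α - 1) :=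
          Real.rpow_le_rpow (by linarith) (by linarith [ht.2]) (le_of_lt hp)
        linarith
    · simp only [hst, if_false]
      split
      · have : 0 ≤ (η - s) ^ (α - 1) := Real.rpow_nonneg (by linarith) _
        linarith
      · linarith
  exact ⟨div_pos hN hG, key, lt_of_lt_of_le (div_pos hN hG) key⟩
end

section
/- Assume: f : [0,1] × [0,∞) → [0,∞) is continuous; k : [0,1]² → [0,∞) is continuous; there exist Φ : [0,1] → [0,∞) integrable, an interval [a,b] ⊆ [0,1], and c₁ ∈ (0,1] with k(t,s) ≤ Φ(s) for all t,s ∈ [0,1] and c₁Φ(s) ≤ k(t,s) for all t ∈ [a,b], s ∈ [0,1]; λ[u] = Λ₀ + ∫₀¹ u(s) dΛ(s), where Λ₀ ≥ 0 and dΛ is a finite positive Borel measure on [0,1]; γ : [0,1] → [0,∞) is continuous with γ(t) ≥ c₂‖γ‖ for all t ∈ [a,b] for some c₂ ∈ (0,1]. Set c = min{c₁, c₂} and K = {u ∈ C[0,1] : u ≥ 0 and min_{t∈[a,b]} u(t) ≥ c‖u‖}. Define (Tu)(t) = γ(t)λ[u] + ∫₀¹ k(t,s) f(s,u(s)) ds.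 Then T maps K into K. -/
open Real Set MeasureTheory

/-- The supremum norm of `u` on `[0,1]`. -/
noncomputable def supNorm (u : ℝ → ℝ) : ℝ := sSup ((fun t => |u t|) '' Set.Icc (0 : ℝ) 1)

/-- The minimum of `u` on `[a,b]`. -/
noncomputable def minOnInterval (a b : ℝ) (u : ℝ → ℝ) : ℝ := sInf (u '' Set.Icc a b)

/-!
Write `Tu = γ·λ[u] + Hu` with `Hu(t) = ∫₀¹ k(t,s) f(s,u(s)) ds`. Both terms are nonnegative
on `[0,1]`, bounded above by a constant `M` and bounded below by `c·M` on `[a,b]`: for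
`γ·λ[u]` take `M = ‖γ‖ λ[u]` and use `γ ≥ c₂‖γ‖`, for `Hu` take
`M = ∫₀¹ Φ(s) f(s,u(s)) ds` and use `c₁Φ ≤ k ≤ Φ`. Such two-sided bounds add up, and a bound
for `Tu` gives `c‖Tu‖ ≤ c·M ≤ min_{[a,b]} Tu`. Continuity of `Hu` follows from that of `k`
by extending `k` to the plane (Tietze).
-/

open Function

section Norms

variable {u : ℝ → ℝ}

lemma le_supNorm (hu : ContinuousOn u (Icc 0 1)) {t : ℝ} (ht : t ∈ Icc (0 : ℝ) 1) :
    u t ≤ supNorm u :=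
  (le_abs_self _).trans <|
    le_csSup (isCompact_Icc.image_of_continuousOn hu.abs).bddAbove ⟨t, ht, rfl⟩

lemma supNorm_le {M : ℝ} (hM : 0 ≤ M) (h : ∀ t ∈ Icc (0 : ℝ) 1, |u t| ≤ M) : supNorm u ≤ M :=
  Real.sSup_le (forall_mem_image.2 h) hM

lemma le_minOnInterval {a b m : ℝ} (hab : a ≤ b) (h : ∀ t ∈ Icc a b, m ≤ u t) :
    m ≤ minOnInterval a b u :=
  le_csInf ((nonempty_Icc.2 hab).image u) (forall_mem_image.2 h)

end Norms

/-- Unlike membership in the cone, this bound is stable under sums and nonnegative scaling. -/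
def ConeBound (c a b M : ℝ) (v : ℝ → ℝ) : Prop :=
  (∀ t ∈ Icc (0 : ℝ) 1, 0 ≤ v t ∧ v t ≤ M) ∧ ∀ t ∈ Icc a b, c * M ≤ v t

namespace ConeBound

variable {c a b M : ℝ} {v : ℝ → ℝ}

lemma bound_nonneg (h : ConeBound c a b M v) : 0 ≤ M :=
  let h₀ := h.1 0 ⟨le_rfl, zero_le_one⟩
  h₀.1.trans h₀.2

lemma mono {c' : ℝ} (h : ConeBound c a b M v) (hc : c' ≤ c) : ConeBound c' a b M v :=
  ⟨h.1, fun t ht => (mul_le_mul_of_nonneg_right hc h.bound_nonneg).trans (h.2 t ht)⟩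

lemma add {M' : ℝ} {w : ℝ → ℝ} (hv : ConeBound c a b M v) (hw : ConeBound c a b M' w) :
    ConeBound c a b (M + M') (v + w) :=
  ⟨fun t ht => ⟨add_nonneg (hv.1 t ht).1 (hw.1 t ht).1, add_le_add (hv.1 t ht).2 (hw.1 t ht).2⟩,
    fun t ht => mul_add c M M' ▸ add_le_add (hv.2 t ht) (hw.2 t ht)⟩

lemma mul_const {l : ℝ} (h : ConeBound c a b M v) (hl : 0 ≤ l) :
    ConeBound c a b (M * l) (fun t => v t * l) :=
  ⟨fun t ht => ⟨mul_nonneg (h.1 t ht).1 hl, mul_le_mul_of_nonneg_right (h.1 t ht).2 hl⟩,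
    fun t ht => mul_assoc c M l ▸ mul_le_mul_of_nonneg_right (h.2 t ht) hl⟩

lemma mul_supNorm_le_minOnInterval (h : ConeBound c a b M v) (hab : a ≤ b) (hc : 0 ≤ c) :
    c * supNorm v ≤ minOnInterval a b v := by
  have hsup : supNorm v ≤ M :=
    supNorm_le h.bound_nonneg fun t ht => (abs_of_nonneg (h.1 t ht).1).trans_le (h.1 t ht).2
  exact (mul_le_mul_of_nonneg_left hsup hc).trans (le_minOnInterval hab h.2)

end ConeBound

lemma coneBound_supNorm {c a b : ℝ} {γ : ℝ → ℝ} (hγ : ContinuousOn γ (Icc 0 1))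
    (hγ_nonneg : ∀ t ∈ Icc (0 : ℝ) 1, 0 ≤ γ t) (hγ_low : ∀ t ∈ Icc a b, c * supNorm γ ≤ γ t) :
    ConeBound c a b (supNorm γ) γ :=
  ⟨fun t ht => ⟨hγ_nonneg t ht, le_supNorm hγ ht⟩, hγ_low⟩

lemma continuousOn_intervalIntegral_of_continuousOn {g : ℝ → ℝ → ℝ} {s : Set ℝ} {a₀ b₀ : ℝ}
    (hs : IsClosed s) (hg : ContinuousOn (uncurry g) (s ×ˢ uIcc a₀ b₀)) :
    ContinuousOn (fun t => ∫ x in a₀..b₀, g t x) s := by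
  obtain ⟨G, hG⟩ := ContinuousMap.exists_restrict_eq (hs.prod isClosed_Icc) ⟨_, hg.domRestrict⟩
  have hG_eq : ∀ t ∈ s, ∀ x ∈ uIcc a₀ b₀, G (t, x) = g t x := fun t ht x hx =>
    congr($hG ⟨(t, x), ht, hx⟩)
  refine (intervalIntegral.continuous_parametric_intervalIntegral_of_continuous'
    (μ := volume) (f := fun t x => G (t, x)) G.continuous a₀ b₀).continuousOn.congr fun t ht => ?_
  exact intervalIntegral.integral_congr fun x hx => (hG_eq t ht x hx).symm

section Kernel

variable {k : ℝ → ℝ → ℝ} {Φ F : ℝ → ℝ}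

lemma intervalIntegrable_kernel_mul (hk : ContinuousOn (uncurry k) (Icc 0 1 ×ˢ Icc 0 1))
    (hF : ContinuousOn F (Icc 0 1)) {t : ℝ} (ht : t ∈ Icc (0 : ℝ) 1) :
    IntervalIntegrable (fun s => k t s * F s) volume 0 1 :=
  ((hk.comp (continuousOn_const.prodMk continuousOn_id) fun _ hs => ⟨ht, hs⟩).mul hF)
    |>.intervalIntegrable_of_Icc zero_le_one

lemma continuousOn_integral_kernel_mul (hk : ContinuousOn (uncurry k) (Icc 0 1 ×ˢ Icc 0 1))
    (hF : ContinuousOn F (Icc 0 1)) :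
    ContinuousOn (fun t => ∫ s in (0 : ℝ)..1, k t s * F s) (Icc 0 1) := by
  refine continuousOn_intervalIntegral_of_continuousOn isClosed_Icc ?_
  rw [uIcc_of_le zero_le_one]
  exact hk.mul (hF.comp continuousOn_snd fun _ hp => hp.2)

lemma coneBound_integral_kernel {a b c₁ : ℝ} (hsub : Icc a b ⊆ Icc 0 1)
    (hk : ContinuousOn (uncurry k) (Icc 0 1 ×ˢ Icc 0 1))
    (hk_nonneg : ∀ t ∈ Icc (0 : ℝ) 1, ∀ s ∈ Icc (0 : ℝ) 1, 0 ≤ k t s)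
    (hΦ : IntegrableOn Φ (Icc 0 1))
    (hkΦ : ∀ t ∈ Icc (0 : ℝ) 1, ∀ s ∈ Icc (0 : ℝ) 1, k t s ≤ Φ s)
    (hkΦ' : ∀ t ∈ Icc a b, ∀ s ∈ Icc (0 : ℝ) 1, c₁ * Φ s ≤ k t s)
    (hF : ContinuousOn F (Icc 0 1)) (hF_nonneg : ∀ s ∈ Icc (0 : ℝ) 1, 0 ≤ F s) :
    ConeBound c₁ a b (∫ s in (0 : ℝ)..1, Φ s * F s) (fun t => ∫ s in (0 : ℝ)..1, k t s * F s) := by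
  have hΦF : IntervalIntegrable (fun s => Φ s * F s) volume 0 1 :=
    (intervalIntegrable_iff_integrableOn_Icc_of_le zero_le_one).2 <|
      hΦ.mul_continuousOn hF isCompact_Icc
  refine ⟨fun t ht => ⟨?_, ?_⟩, fun t ht => ?_⟩
  · exact intervalIntegral.integral_nonneg zero_le_one fun s hs =>
      mul_nonneg (hk_nonneg t ht s hs) (hF_nonneg s hs)
  · exact intervalIntegral.integral_mono_on zero_le_one (intervalIntegrable_kernel_mul hk hF ht)
      hΦF fun s hs => mul_le_mul_of_nonneg_right (hkΦ t ht s hs) (hF_nonneg s hs)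
  · rw [← intervalIntegral.integral_const_mul]
    exact intervalIntegral.integral_mono_on zero_le_one (hΦF.const_mul c₁)
      (intervalIntegrable_kernel_mul hk hF (hsub ht))
      fun s hs => mul_assoc c₁ (Φ s) (F s) ▸
        mul_le_mul_of_nonneg_right (hkΦ' t ht s hs) (hF_nonneg s hs)

end Kernel

theorem T_maps_cone_into_cone_general
    (f k : ℝ → ℝ → ℝ) (Φ γ : ℝ → ℝ) (a b c₁ c₂ Λ₀ : ℝ) (μ : Measure ℝ)
    (hf_cont : ContinuousOn (fun p : ℝ × ℝ => f p.1 p.2) (Set.Icc 0 1 ×ˢ Set.Ici 0))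
    (hf_nonneg : ∀ t ∈ Set.Icc (0 : ℝ) 1, ∀ u : ℝ, 0 ≤ u → 0 ≤ f t u)
    (hk_cont : ContinuousOn (fun p : ℝ × ℝ => k p.1 p.2) (Set.Icc 0 1 ×ˢ Set.Icc 0 1))
    (hk_nonneg : ∀ t ∈ Set.Icc (0 : ℝ) 1, ∀ s ∈ Set.Icc (0 : ℝ) 1, 0 ≤ k t s)
    (hΦ_int : IntegrableOn Φ (Set.Icc 0 1))
    (ha : 0 ≤ a) (hab : a ≤ b) (hb : b ≤ 1)
    (hc₁ : 0 < c₁) (hc₂ : 0 < c₂)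
    (hkΦ : ∀ t ∈ Set.Icc (0 : ℝ) 1, ∀ s ∈ Set.Icc (0 : ℝ) 1, k t s ≤ Φ s)
    (hkΦ' : ∀ t ∈ Set.Icc a b, ∀ s ∈ Set.Icc (0 : ℝ) 1, c₁ * Φ s ≤ k t s)
    (hΛ₀ : 0 ≤ Λ₀)
    (hγ_cont : ContinuousOn γ (Set.Icc 0 1))
    (hγ_nonneg : ∀ t ∈ Set.Icc (0 : ℝ) 1, 0 ≤ γ t)
    (hγc₂ : ∀ t ∈ Set.Icc a b, c₂ * supNorm γ ≤ γ t)
    (lam : (ℝ → ℝ) → ℝ)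
    (hlam : ∀ u : ℝ → ℝ, lam u = Λ₀ + ∫ s in Set.Icc (0 : ℝ) 1, u s ∂μ)
    (c : ℝ) (hc : c = min c₁ c₂)
    (K : Set (ℝ → ℝ))
    (hK : K = {u | ContinuousOn u (Set.Icc 0 1) ∧ (∀ t ∈ Set.Icc (0 : ℝ) 1, 0 ≤ u t) ∧
      c * supNorm u ≤ minOnInterval a b u})
    (T : (ℝ → ℝ) → ℝ → ℝ)
    (hT : ∀ u : ℝ → ℝ, ∀ t : ℝ,
      T u t = γ t * lam u + ∫ s in (0 : ℝ)..1, k t s * f s (u s)) :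
    ∀ u ∈ K, T u ∈ K := by
  subst hc hK
  rintro u ⟨hu_cont, hu_nonneg, -⟩
  set F : ℝ → ℝ := fun s => f s (u s)
  have hF_cont : ContinuousOn F (Icc 0 1) :=
    hf_cont.comp (continuousOn_id.prodMk hu_cont) fun s hs => ⟨hs, hu_nonneg s hs⟩
  have hF_nonneg : ∀ s ∈ Icc (0 : ℝ) 1, 0 ≤ F s := fun s hs => hf_nonneg s hs _ (hu_nonneg s hs)
  have hlam_nonneg : 0 ≤ lam u :=
    hlam u ▸ add_nonneg hΛ₀ (setIntegral_nonneg measurableSet_Icc hu_nonneg)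
  have hTu : T u = (fun t => γ t * lam u) + fun t => ∫ s in (0 : ℝ)..1, k t s * F s :=
    funext (hT u)
  have hbound : ConeBound (min c₁ c₂) a b _ (T u) := hTu ▸
    (((coneBound_supNorm hγ_cont hγ_nonneg hγc₂).mul_const hlam_nonneg).mono (min_le_right _ _)).add
      ((coneBound_integral_kernel (Icc_subset_Icc ha hb) hk_cont hk_nonneg hΦ_int hkΦ hkΦ' hF_cont
        hF_nonneg).mono (min_le_left _ _))
  refine ⟨?_, fun t ht => (hbound.1 t ht).1,
    hbound.mul_supNorm_le_minOnInterval hab (le_min hc₁.le hc₂.le)⟩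
  rw [hTu]
  exact (hγ_cont.mul continuousOn_const).add (continuousOn_integral_kernel_mul hk_cont hF_cont)

/-- Under the standing hypotheses on `f`, `k`, `Φ`, `[a,b]`, `c₁`, the functional
`λ[u] = Λ₀ + ∫₀¹ u dΛ` (with `Λ₀ ≥ 0` and `dΛ` a finite positive measure), and `γ`
(with `γ ≥ c₂‖γ‖` on `[a,b]`), the perturbed Hammerstein operator
`(Tu)(t) = γ(t)λ[u] + ∫₀¹ k(t,s)f(s,u(s)) ds` maps the cone
`K = {u ∈ C[0,1] : u ≥ 0, min_{[a,b]} u ≥ c‖u‖}`, `c = min{c₁,c₂}`, into itself. -/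
theorem T_maps_cone_into_cone
    (f k : ℝ → ℝ → ℝ) (Φ γ : ℝ → ℝ) (a b c₁ c₂ Λ₀ : ℝ) (μ : Measure ℝ)
    [IsFiniteMeasure μ]
    (hf_cont : ContinuousOn (fun p : ℝ × ℝ => f p.1 p.2) (Set.Icc 0 1 ×ˢ Set.Ici 0))
    (hf_nonneg : ∀ t ∈ Set.Icc (0 : ℝ) 1, ∀ u : ℝ, 0 ≤ u → 0 ≤ f t u)
    (hk_cont : ContinuousOn (fun p : ℝ × ℝ => k p.1 p.2) (Set.Icc 0 1 ×ˢ Set.Icc 0 1))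
    (hk_nonneg : ∀ t ∈ Set.Icc (0 : ℝ) 1, ∀ s ∈ Set.Icc (0 : ℝ) 1, 0 ≤ k t s)
    (hΦ_int : IntegrableOn Φ (Set.Icc 0 1))
    (hΦ_nonneg : ∀ s ∈ Set.Icc (0 : ℝ) 1, 0 ≤ Φ s)
    (ha : 0 ≤ a) (hab : a ≤ b) (hb : b ≤ 1)
    (hc₁ : 0 < c₁) (hc₁' : c₁ ≤ 1) (hc₂ : 0 < c₂) (hc₂' : c₂ ≤ 1)
    (hkΦ : ∀ t ∈ Set.Icc (0 : ℝ) 1, ∀ s ∈ Set.Icc (0 : ℝ) 1, k t s ≤ Φ s)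
    (hkΦ' : ∀ t ∈ Set.Icc a b, ∀ s ∈ Set.Icc (0 : ℝ) 1, c₁ * Φ s ≤ k t s)
    (hΛ₀ : 0 ≤ Λ₀)
    (hγ_cont : ContinuousOn γ (Set.Icc 0 1))
    (hγ_nonneg : ∀ t ∈ Set.Icc (0 : ℝ) 1, 0 ≤ γ t)
    (hγc₂ : ∀ t ∈ Set.Icc a b, c₂ * supNorm γ ≤ γ t)
    (lam : (ℝ → ℝ) → ℝ)
    (hlam : ∀ u : ℝ → ℝ, lam u = Λ₀ + ∫ s in Set.Icc (0 : ℝ) 1, u s ∂μ)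
    (c : ℝ) (hc : c = min c₁ c₂)
    (K : Set (ℝ → ℝ))
    (hK : K = {u | ContinuousOn u (Set.Icc 0 1) ∧ (∀ t ∈ Set.Icc (0 : ℝ) 1, 0 ≤ u t) ∧
      c * supNorm u ≤ minOnInterval a b u})
    (T : (ℝ → ℝ) → ℝ → ℝ)
    (hT : ∀ u : ℝ → ℝ, ∀ t : ℝ,
      T u t = γ t * lam u + ∫ s in (0 : ℝ)..1, k t s * f s (u s)) :
    ∀ u ∈ K, T u ∈ K :=
  T_maps_cone_into_cone_general f k Φ γ a b c₁ c₂ Λ₀ μ hf_cont hf_nonneg hk_cont hk_nonneg hΦ_int ha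
    hab hb hc₁ hc₂ hkΦ hkΦ' hΛ₀ hγ_cont hγ_nonneg hγc₂ lam hlam c hc K hK T hT
end
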